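/- arXiv:2008.04871 — 3 statements merged into one kernel-verified Lean document; each statement's English description precedes it below -/
import Mathlib

section
/- Let f : ℝ → ℝ be a continuous map and let I = [a,b] be a nonempty compact interval such that for every compact interval J whose interior contains I one has f(J) ⊆ interior(J). Then f has a fixed point lying in I. -/
/-- A coarsely contracting continuous map of the line has a fixed point in its
core interval: if `I = [a,b]` is nonempty and every compact interval `J` whose
interior contains `I` satisfies `f(J) ⊆ interior J`, then `f` has a fixed
point in `I`. -/
theorem coarsely_contracting_has_fixed_point
    (f : ℝ → ℝ) (hf : Continuous f) (a b : ℝ) (hab : a ≤ b)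
    (h : ∀ c d : ℝ, Set.Icc a b ⊆ interior (Set.Icc c d) →
      f '' Set.Icc c d ⊆ interior (Set.Icc c d)) :
    ∃ x ∈ Set.Icc a b, f x = x := by
  -- Step 1: f maps [a,b] into [a,b].
  have key : ∀ x ∈ Set.Icc a b, f x ∈ Set.Icc a b := by
    intro x hx
    have main : ∀ ε : ℝ, 0 < ε → f x ∈ Set.Ioo (a - ε) (b + ε) := by
      intro ε hε
      have hsub : Set.Icc a b ⊆ interior (Set.Icc (a - ε) (b + ε)) := by
        rw [interior_Icc]
        intro y hy
        exact ⟨by linarith [hy.1], by linarith [hy.2]⟩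
      have := h (a - ε) (b + ε) hsub ⟨x, ⟨by linarith [hx.1], by linarith [hx.2]⟩, rfl⟩
      rwa [interior_Icc] at this
    constructor
    · by_contra hlt
      push_neg at hlt
      have := (main ((a - f x) / 2) (by linarith)).1
      linarith
    · by_contra hlt
      push_neg at hlt
      have := (main ((f x - b) / 2) (by linarith)).2
      linarith
  -- Step 2: IVT for g x = f x - x.
  have ha' : a ≤ f a := (key a ⟨le_refl a, hab⟩).1
  have hb' : f b ≤ b := (key b ⟨hab, le_refl b⟩).2
  have hg : ContinuousOn (fun x => f x - x) (Set.Icc a b) :=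
    (hf.sub continuous_id).continuousOn
  have h0 : (0 : ℝ) ∈ Set.Icc (f b - b) (f a - a) := ⟨by linarith, by linarith⟩
  obtain ⟨x, hx, hfx⟩ := intermediate_value_Icc' hab hg h0
  have hfx' : f x - x = 0 := hfx
  exact ⟨x, hx, by linarith⟩
end

section
/- Let f : ℝ → ℝ be a homeomorphism. It is impossible for f to be simultaneously coarsely contracting and coarsely expanding; that is, there cannot exist nonempty compact intervals I and I' such that f(J) ⊆ interior(J) for every compact interval J with I ⊆ interior(J), and f⁻¹(J') ⊆ interior(J') for every compact interval J' with I' ⊆ interior(J'). -/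
/-- A homeomorphism of the line cannot be simultaneously coarsely contracting
(with core interval `[a,b]`) and coarsely expanding (i.e. its inverse is
coarsely contracting, with core interval `[a',b']`). -/
theorem not_coarsely_contracting_and_expanding (f : ℝ ≃ₜ ℝ) :
    ¬ ∃ a b a' b' : ℝ, a ≤ b ∧ a' ≤ b' ∧
      (∀ c d : ℝ, Set.Icc a b ⊆ interior (Set.Icc c d) →
        f '' Set.Icc c d ⊆ interior (Set.Icc c d)) ∧
      (∀ c d : ℝ, Set.Icc a' b' ⊆ interior (Set.Icc c d) →
        f.symm '' Set.Icc c d ⊆ interior (Set.Icc c d)) := by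
  rintro ⟨a, b, a', b', hab, hab', hC, hE⟩
  set c := min a a' - 1 with hc
  set d := max b b' + 1 with hd
  have hcd : c < d := by
    have h1 : min a a' ≤ a := min_le_left _ _
    have h2 : b ≤ max b b' := le_max_left _ _
    simp only [hc, hd]; linarith
  have hintJ : interior (Set.Icc c d) = Set.Ioo c d := interior_Icc
  have hsub : ∀ x y : ℝ, c < x → y < d → Set.Icc x y ⊆ interior (Set.Icc c d) := by
    intro x y hx hy
    rw [hintJ]
    exact Set.Icc_subset_Ioo hx hy
  have hI : Set.Icc a b ⊆ interior (Set.Icc c d) := by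
    apply hsub
    · have : min a a' ≤ a := min_le_left _ _; simp only [hc]; linarith
    · have : b ≤ max b b' := le_max_left _ _; simp only [hd]; linarith
  have hI' : Set.Icc a' b' ⊆ interior (Set.Icc c d) := by
    apply hsub
    · have : min a a' ≤ a' := min_le_right _ _; simp only [hc]; linarith
    · have : b' ≤ max b b' := le_max_right _ _; simp only [hd]; linarith
  have h1 := hC c d hI
  have h2 := hE c d hI'
  -- f.symm '' J ⊆ J, hence J ⊆ f '' J ⊆ interior J
  have h3 : Set.Icc c d ⊆ f '' Set.Icc c d := by
    intro x hx
    have : f.symm x ∈ interior (Set.Icc c d) := h2 ⟨x, hx, rfl⟩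
    exact ⟨f.symm x, interior_subset this, f.apply_symm_apply x⟩
  have h4 : Set.Icc c d ⊆ interior (Set.Icc c d) := h3.trans h1
  have : d ∈ Set.Ioo c d := by
    rw [← hintJ]; exact h4 ⟨le_of_lt hcd, le_refl d⟩
  exact lt_irrefl d this.2
end

section
/- Let X and Y be compact connected subsets of the 2-sphere S² such that neither X nor Y separates S², and such that X ∩ Y is nonempty and connected. Then X ∪ Y does not separate S². -/
/-!
Work with continuous branches of `log z` on closed subsets of `ℂ \ {0}`. Such a branch exists on
a compact `K` with connected complement (lift through `exp` a homotopy from `z + M` to `z`), and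
none exists on the frontier of a bounded set containing `0` (it would yield a logarithm of a
nonvanishing map of the plane that is the identity on a large circle). Branches on `A` and `B`
differ by a constant on a connected `A ∩ B`, so they glue to a branch on `A ∪ B`.

If `(X ∪ Y)ᶜ` splits, with `p` and `q` in different pieces, stereographic projection from `q`
sending `p` to `0` makes the piece of `p` a bounded set containing `0` with frontier in the image
of `X ∪ Y`. The images of `X` and `Y` have connected complements, because removing a point from a
connected open subset of the sphere keeps it connected; so `log z` has a branch on the image of
`X ∪ Y`, a contradiction.
-/

open Set Metric Complex Bornology
open scoped Real

theorem frontier_inter_subset_compl {α : Type*} [TopologicalSpace α] {W u v : Set α}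
    (hW : IsOpen W) (hu : IsOpen u) (hv : IsOpen v) (hWuv : W ⊆ u ∪ v)
    (hdisj : W ∩ (u ∩ v) = ∅) : frontier (W ∩ u) ⊆ Wᶜ := by
  intro y hy hyW
  rw [(hW.inter hu).frontier_eq] at hy
  have hyv : y ∈ v := (hWuv hyW).resolve_left fun hyu => hy.2 ⟨hyW, hyu⟩
  obtain ⟨z, hz, hzWu⟩ := mem_closure_iff.mp hy.1 (W ∩ v) (hW.inter hv) ⟨hyW, hyv⟩
  exact hdisj.subset ⟨hzWu.1, hzWu.2, hz.2⟩

theorem IsPreconnected.diff_singleton {α : Type*} [TopologicalSpace α] [T1Space α] {U B : Set α}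
    {z : α} (hU : IsPreconnected U) (hB : IsOpen B) (hzB : z ∈ B) (hBU : B ⊆ U)
    (hBz : IsPreconnected (B \ {z})) : IsPreconnected (U \ {z}) := by
  rw [isPreconnected_iff_subset_of_disjoint]
  intro u v hu hv hcover hdisj
  wlog hBu : B \ {z} ⊆ u generalizing u v
  · have hBz_sub : B \ {z} ⊆ U \ {z} := sdiff_subset_sdiff_left hBU
    obtain hBu' | hBv := isPreconnected_iff_subset_of_disjoint.mp hBz u v hu hv
      (hBz_sub.trans hcover) (subset_empty_iff.mp (hdisj ▸ inter_subset_inter_left _ hBz_sub))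
    · exact absurd hBu' hBu
    · rw [union_comm] at hcover
      rw [inter_comm u v] at hdisj
      exact (this v u hv hu hcover hdisj hBv).symm
  -- gluing the whole of `B` to `u` separates `U` unless `U \ {z} ⊆ u`
  have hUcover : U ⊆ (u ∪ B) ∪ (v \ {z}) := fun x hx => by
    by_cases hxz : x = z
    · exact Or.inl (Or.inr (hxz ▸ hzB))
    · rcases hcover ⟨hx, hxz⟩ with h | h
      exacts [Or.inl (Or.inl h), Or.inr ⟨h, hxz⟩]
  have hUdisj : U ∩ ((u ∪ B) ∩ (v \ {z})) = ∅ := by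
    refine eq_empty_of_forall_notMem ?_
    rintro x ⟨hxU, hxuB, hxv, hxz⟩
    have hxu : x ∈ u := hxuB.elim id fun h => hBu ⟨h, hxz⟩
    exact hdisj.subset ⟨⟨hxU, hxz⟩, hxu, hxv⟩
  rcases isPreconnected_iff_subset_of_disjoint.mp hU _ _ (hu.union hB)
    (hv.sdiff isClosed_singleton) hUcover hUdisj with h | h
  · exact Or.inl fun x hx => (h hx.1).elim id fun hxB => hBu ⟨hxB, hx.2⟩
  · exact absurd (h (hBU hzB)).2 (by simp)

theorem isPreconnected_ball_diff_center (c : ℂ) {r : ℝ} (hr : 0 < r) :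
    IsPreconnected (ball c r \ {c}) := by
  have : ball c r \ {c} = (fun w => c + exp w) '' {w | w.re < Real.log r} := by
    ext z
    simp only [mem_sdiff, mem_ball, mem_singleton_iff, mem_image, mem_ofPred_eq, dist_eq]
    constructor
    · rintro ⟨hzr, hzc⟩
      have hz : z - c ≠ 0 := sub_ne_zero.mpr hzc
      refine ⟨log (z - c), ?_, by rw [exp_log hz]; ring⟩
      rw [log_re]
      exact Real.log_lt_log (norm_pos_iff.mpr hz) hzr
    · rintro ⟨w, hw, rfl⟩
      refine ⟨?_, by simp [exp_ne_zero]⟩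
      simpa [norm_exp] using (Real.exp_lt_exp.mpr hw).trans_eq (Real.exp_log hr)
  rw [this]
  exact (convex_halfSpace_re_lt _).isPreconnected.image _ (by fun_prop)

theorem IsOpen.isPreconnected_diff_singleton {U : Set ℂ} (hU : IsOpen U) (hUc : IsPreconnected U)
    (z : ℂ) : IsPreconnected (U \ {z}) := by
  by_cases hz : z ∈ U
  · obtain ⟨r, hr, hrU⟩ := isOpen_iff.mp hU z hz
    exact hUc.diff_singleton isOpen_ball (mem_ball_self hr) hrU
      (isPreconnected_ball_diff_center z hr)
  · rwa [sdiff_singleton_eq_self hz]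

def HasContinuousLogOn (K : Set ℂ) : Prop :=
  ∃ g : ℂ → ℂ, ContinuousOn g K ∧ ∀ z ∈ K, exp (g z) = z

theorem HasContinuousLogOn.mono {K L : Set ℂ} (h : HasContinuousLogOn K) (hLK : L ⊆ K) :
    HasContinuousLogOn L :=
  let ⟨g, hg, hexp⟩ := h
  ⟨g, hg.mono hLK, fun z hz => hexp z (hLK hz)⟩

theorem HasContinuousLogOn.of_continuousMap {K : Set ℂ} (g : C(K, ℂ))
    (hg : ∀ z, exp (g z) = z) : HasContinuousLogOn K := by
  classical
  refine ⟨fun z => if hz : z ∈ K then g ⟨z, hz⟩ else 0, ?_, fun z hz => by simp [hz, hg]⟩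
  rw [continuousOn_iff_continuous_domRestrict]
  convert g.continuous with z
  simp

theorem IsPreconnected.exists_eq_add_of_exp_eq_exp {α : Type*} [TopologicalSpace α] {s : Set α}
    (hs : IsPreconnected s) {f g : α → ℂ} (hf : ContinuousOn f s) (hg : ContinuousOn g s)
    (hfg : ∀ z ∈ s, exp (f z) = exp (g z)) :
    ∃ c, exp c = 1 ∧ ∀ z ∈ s, f z = g z + c := by
  rcases s.eq_empty_or_nonempty with rfl | ⟨x, hx⟩
  · exact ⟨0, exp_zero, fun z hz => hz.elim⟩
  have hmaps : MapsTo (f - g) s (AddSubgroup.zmultiples (2 * π * I)) := by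
    intro z hz
    obtain ⟨n, hn⟩ := (exp_eq_one_iff (x := f z - g z)).mp
      (by rw [exp_sub, hfg z hz, div_self (exp_ne_zero _)])
    exact ⟨n, by simp [hn]⟩
  have hdiscr : IsDiscrete (AddSubgroup.zmultiples (2 * π * I) : Set ℂ) :=
    isDiscrete_iff_discreteTopology.mpr (NormedSpace.discreteTopology_zmultiples _)
  refine ⟨f x - g x, by rw [exp_sub, hfg x hx, div_self (exp_ne_zero _)], fun z hz => ?_⟩
  have := hs.constant_of_mapsTo hdiscr (hf.sub hg) hmaps hz hx
  simp only [Pi.sub_apply] at this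
  rw [← this]
  ring

theorem HasContinuousLogOn.union {A B : Set ℂ} (hA : IsClosed A) (hB : IsClosed B)
    (hAB : IsPreconnected (A ∩ B)) (hlogA : HasContinuousLogOn A)
    (hlogB : HasContinuousLogOn B) : HasContinuousLogOn (A ∪ B) := by
  classical
  obtain ⟨gA, hgA, hexpA⟩ := hlogA
  obtain ⟨gB, hgB, hexpB⟩ := hlogB
  obtain ⟨c, hc, hAB_eq⟩ := hAB.exists_eq_add_of_exp_eq_exp (hgA.mono inter_subset_left)
    (hgB.mono inter_subset_right) fun z hz => by rw [hexpA z hz.1, hexpB z hz.2]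
  have hexpB' : ∀ z ∈ B, exp (gB z + c) = z := fun z hz => by
    rw [exp_add, hc, mul_one, hexpB z hz]
  have hgB' : ContinuousOn (gB · + c) B := hgB.add continuousOn_const
  refine ⟨A.piecewise gA (gB · + c), ?_, ?_⟩
  · refine ContinuousOn.union_of_isClosed (hgA.congr fun z hz => piecewise_eq_of_mem _ _ _ hz)
      (hgB'.congr fun z hz => ?_) hA hB
    by_cases hzA : z ∈ A
    · rw [piecewise_eq_of_mem _ _ _ hzA, hAB_eq z ⟨hzA, hz⟩]
    · rw [piecewise_eq_of_notMem _ _ _ hzA]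
  · rintro z (hz | hz)
    · rw [piecewise_eq_of_mem _ _ _ hz, hexpA z hz]
    · by_cases hzA : z ∈ A
      · rw [piecewise_eq_of_mem _ _ _ hzA, hexpA z hzA]
      · rw [piecewise_eq_of_notMem _ _ _ hzA, hexpB' z hz]

theorem not_hasContinuousLogOn_sphere {R : ℝ} (hR : 0 < R) :
    ¬ HasContinuousLogOn (sphere (0 : ℂ) R) := by
  rintro ⟨g, hg, hexp⟩
  obtain ⟨c, -, hc⟩ := isPreconnected_univ.exists_eq_add_of_exp_eq_exp
    (hg.comp_continuous (continuous_circleMap 0 R) (circleMap_mem_sphere 0 hR.le)).continuousOn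
    (f := fun θ : ℝ => g (circleMap 0 R θ)) (g := fun θ : ℝ => θ * I + log R)
    (by fun_prop) fun θ _ => by
      rw [hexp _ (circleMap_mem_sphere 0 hR.le θ), exp_add, exp_log (by exact_mod_cast hR.ne'),
        circleMap, zero_add, mul_comm]
  have h := (hc 0 trivial).symm.trans
    ((congrArg g (periodic_circleMap 0 R).eq).symm.trans (hc (2 * π) trivial))
  push_cast at h
  exact two_pi_I_ne_zero (by linear_combination -h)

theorem Continuous.exists_continuous_exp_eq {F : ℂ → ℂ} (hF : Continuous F)
    (hF0 : ∀ z, F z ≠ 0) : ∃ Λ : C(ℂ, ℂ), ∀ z, exp (Λ z) = F z := by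
  obtain ⟨Λ, ⟨-, hΛ⟩, -⟩ := isCoveringMapOn_exp.existsUnique_continuousMap_lifts ⟨F, hF⟩
    (a₀ := 0) (exp_log (hF0 0)) hF0
  exact ⟨Λ, congrFun hΛ⟩

theorem not_hasContinuousLogOn_frontier {P : Set ℂ} (hPb : IsBounded P) (h0 : 0 ∈ P) :
    ¬ HasContinuousLogOn (frontier P) := by
  classical
  rintro ⟨g, hg, hexp⟩
  obtain ⟨G, hG⟩ := ContinuousMap.exists_restrict_eq isClosed_frontier ⟨_, hg.domRestrict⟩
  have hGg : ∀ z ∈ frontier P, G z = g z := fun z hz =>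
    congrFun (congrArg DFunLike.coe hG) ⟨z, hz⟩
  set F : ℂ → ℂ := fun z => if z ∈ closure P then exp (G z) else z
  have hF : Continuous F := by
    refine Continuous.if (fun z hz => ?_) (by fun_prop) continuous_id
    have hz' : z ∈ frontier P := frontier_closure_subset hz
    rw [hGg z hz', hexp z hz']
  have hF0 : ∀ z, F z ≠ 0 := fun z => by
    dsimp only [F]
    split_ifs with hz
    · exact exp_ne_zero _
    · rintro rfl
      exact hz (subset_closure h0)
  obtain ⟨Λ, hΛ⟩ := hF.exists_continuous_exp_eq hF0
  obtain ⟨R, hR, hPR⟩ := hPb.closure.subset_ball_lt 0 0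
  refine not_hasContinuousLogOn_sphere hR ⟨Λ, Λ.continuous.continuousOn, fun z hz => ?_⟩
  have hz : z ∉ closure P := fun h => (ne_of_lt (mem_ball.mp (hPR h))) (mem_sphere.mp hz)
  rw [hΛ]
  exact if_neg hz

theorem IsCompact.hasContinuousLogOn_of_isPreconnected_compl {K : Set ℂ} (hK : IsCompact K)
    (h0 : 0 ∉ K) (hKc : IsPreconnected Kᶜ) : HasContinuousLogOn K := by
  obtain ⟨M, hM, hKM⟩ := hK.isBounded.subset_ball_lt 0 0
  have hMK : (-M : ℂ) ∉ K := fun h => by simpa [abs_of_pos hM] using hKM h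
  obtain ⟨γ, hγ⟩ : JoinedIn Kᶜ (-M : ℂ) 0 :=
    (hK.isClosed.isOpen_compl.isConnected_iff_isPathConnected.mp ⟨⟨0, h0⟩, hKc⟩).joinedIn
      _ hMK _ h0
  have hslit : ∀ z : K, (z : ℂ) + M ∈ slitPlane := fun z => by
    have hz : ‖(z : ℂ)‖ < M := by simpa using hKM z.2
    refine mem_slitPlane_iff.mpr (Or.inl ?_)
    rw [add_re, ofReal_re]
    linarith [neg_abs_le (z : ℂ).re, abs_re_le_norm (z : ℂ)]
  -- `z - γ t` deforms `z + M`, which has the branch `log (z + M)` on `K`, into `z`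
  let H : C(unitInterval × K, {w : ℂ // w ≠ 0}) :=
    ⟨fun tz => ⟨tz.2 - γ tz.1, sub_ne_zero.mpr fun h => hγ tz.1 (h ▸ tz.2.2)⟩,
      by fun_prop⟩
  let log₀ : C(K, ℂ) :=
    ⟨fun z => log (z + M), (by fun_prop : Continuous fun z : K => (z : ℂ) + M).clog hslit⟩
  have H_zero : ∀ z, H (0, z) = ⟨exp (log₀ z), exp_ne_zero _⟩ := fun z =>
    Subtype.ext (by simp [H, log₀, exp_log (slitPlane_ne_zero (hslit z))])
  refine .of_continuousMap ((isCoveringMap_exp.liftHomotopy H log₀ H_zero).comp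
    ((ContinuousMap.const K 1).prodMk (.id K))) fun z => ?_
  have := congrFun (isCoveringMap_exp.liftHomotopy_lifts H log₀ H_zero) (1, z)
  simpa [H] using congrArg Subtype.val this

local notation "𝕊²" => Metric.sphere (0 : EuclideanSpace ℝ (Fin 3)) (1 : ℝ)

instance : Fact (Module.finrank ℝ (EuclideanSpace ℝ (Fin 3)) = 2 + 1) := ⟨by simp⟩

noncomputable def sphereChart (q a : 𝕊²) : OpenPartialHomeomorph 𝕊² ℂ :=
  let e := (stereographic' 2 q).trans
    orthonormalBasisOneI.repr.symm.toHomeomorph.toOpenPartialHomeomorph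
  e.trans (Homeomorph.subRight (e a)).toOpenPartialHomeomorph

section sphereChart

variable {q a : 𝕊²}

@[simp]
theorem sphereChart_source : (sphereChart q a).source = {q}ᶜ := by
  simp [sphereChart]

@[simp]
theorem sphereChart_target : (sphereChart q a).target = univ := by
  simp [sphereChart]

@[simp]
theorem sphereChart_apply_self : sphereChart q a a = 0 := by
  simp [sphereChart]

theorem continuous_sphereChart_symm : Continuous (sphereChart q a).symm := by
  simpa using (sphereChart q a).continuousOn_symm

theorem injective_sphereChart_symm : Function.Injective (sphereChart q a).symm :=
  injOn_univ.mp (by simpa using (sphereChart q a).symm.injOn)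

theorem range_sphereChart_symm : range (sphereChart q a).symm = {q}ᶜ := by
  simpa using (sphereChart q a).symm_image_target_eq_source

theorem sphereChart_symm_zero (haq : a ≠ q) : (sphereChart q a).symm 0 = a := by
  simpa using (sphereChart q a).left_inv (x := a) (by simpa using haq)

theorem image_sphereChart {s : Set 𝕊²} (hqs : q ∉ s) :
    sphereChart q a '' s = (sphereChart q a).symm ⁻¹' s := by
  rw [(sphereChart q a).image_eq_target_inter_inv_preimage (by simpa using hqs),
    sphereChart_target, univ_inter]

theorem isPreconnected_preimage_sphereChart_symm {s : Set 𝕊²} (hs : IsPreconnected s)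
    (hqs : q ∉ s) : IsPreconnected ((sphereChart q a).symm ⁻¹' s) :=
  image_sphereChart hqs ▸ hs.image _ ((sphereChart q a).continuousOn.mono (by simpa using hqs))

theorem isBounded_preimage_sphereChart_symm {s : Set 𝕊²} (hqs : q ∉ closure s) :
    IsBounded ((sphereChart q a).symm ⁻¹' s) := by
  have hK : IsCompact (sphereChart q a '' closure s) :=
    isClosed_closure.isCompact.image_of_continuousOn
      ((sphereChart q a).continuousOn.mono (by simpa using hqs))
  rw [image_sphereChart hqs] at hK
  exact hK.isBounded.subset (preimage_mono subset_closure)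

end sphereChart

theorem IsOpen.isPreconnected_diff_singleton_sphere {U : Set 𝕊²} (hU : IsOpen U)
    (hUc : IsPreconnected U) {x : 𝕊²} (hx : x ∉ U) (y : 𝕊²) :
    IsPreconnected (U \ {y}) := by
  by_cases hy : y ∈ U
  swap
  · rwa [sdiff_singleton_eq_self hy]
  have hyx : y ≠ x := ne_of_mem_of_not_mem hy hx
  have hzero : ∀ z, (sphereChart x y).symm z = y ↔ z = 0 := fun z => by
    rw [← injective_sphereChart_symm.eq_iff (a := z), sphereChart_symm_zero hyx]
  have hpre : (sphereChart x y).symm ⁻¹' (U \ {y}) = (sphereChart x y).symm ⁻¹' U \ {0} := by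
    ext z
    simp only [mem_preimage, mem_sdiff, mem_singleton_iff, hzero]
  have h := (hU.preimage continuous_sphereChart_symm).isPreconnected_diff_singleton
    (isPreconnected_preimage_sphereChart_symm (a := y) hUc hx) 0
  rw [← hpre] at h
  have hrange : U \ {y} ⊆ range (sphereChart x y).symm := by
    rw [range_sphereChart_symm]
    exact fun z hz hzx => hx (hzx ▸ hz.1)
  rw [← image_preimage_eq_of_subset hrange]
  exact h.image _ continuous_sphereChart_symm.continuousOn

theorem IsCompact.hasContinuousLogOn_preimage_sphereChart_symm {q a : 𝕊²} {X : Set 𝕊²}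
    (hX : IsCompact X) (hXc : IsPreconnected Xᶜ) {x : 𝕊²} (hx : x ∈ X) (hqX : q ∉ X)
    (haX : a ∉ X) (haq : a ≠ q) : HasContinuousLogOn ((sphereChart q a).symm ⁻¹' X) := by
  refine IsCompact.hasContinuousLogOn_of_isPreconnected_compl ?_ ?_ ?_
  · rw [← image_sphereChart hqX]
    exact hX.image_of_continuousOn ((sphereChart q a).continuousOn.mono (by simpa using hqX))
  · rwa [mem_preimage, sphereChart_symm_zero haq]
  · have hq : (sphereChart q a).symm ⁻¹' {q} = ∅ :=
      preimage_singleton_eq_empty.mpr (by simp [range_sphereChart_symm])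
    have hpunct := hX.isClosed.isOpen_compl.isPreconnected_diff_singleton_sphere hXc
      (not_not.mpr hx) q
    simpa [preimage_sdiff, hq] using
      isPreconnected_preimage_sphereChart_symm (a := a) hpunct fun h => h.2 rfl

theorem union_not_separating_sphere_general
    (X Y : Set ↥(Metric.sphere (0 : EuclideanSpace ℝ (Fin 3)) 1))
    (hXc : IsCompact X) (hYc : IsCompact Y)
    (hXns : IsPreconnected Xᶜ) (hYns : IsPreconnected Yᶜ)
    (hne : (X ∩ Y).Nonempty) (hconn : IsPreconnected (X ∩ Y)) :
    IsPreconnected (X ∪ Y)ᶜ := by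
  obtain ⟨x, hxX, hxY⟩ := hne
  rw [isPreconnected_iff_subset_of_disjoint]
  intro u v hu hv hcover hdisj
  by_contra! h
  obtain ⟨q, hqW, hqu⟩ := not_subset.mp h.1
  obtain ⟨p, hpW, hpv⟩ := not_subset.mp h.2
  have hpu : p ∈ u := (hcover hpW).resolve_right hpv
  have hfr : frontier ((X ∪ Y)ᶜ ∩ u) ⊆ X ∪ Y := by
    simpa only [compl_compl] using
      frontier_inter_subset_compl (hXc.union hYc).isClosed.isOpen_compl hu hv hcover hdisj
  have hq : q ∉ closure ((X ∪ Y)ᶜ ∩ u) := by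
    rw [closure_eq_self_union_frontier]
    rintro (hq | hq)
    exacts [hqu hq.2, hqW (hfr hq)]
  have hpq : p ≠ q := ne_of_mem_of_not_mem hpu hqu
  have hlogX := hXc.hasContinuousLogOn_preimage_sphereChart_symm hXns hxX (hqW ∘ Or.inl)
    (hpW ∘ Or.inl) hpq
  have hlogY := hYc.hasContinuousLogOn_preimage_sphereChart_symm hYns hxY (hqW ∘ Or.inr)
    (hpW ∘ Or.inr) hpq
  have hlog : HasContinuousLogOn ((sphereChart q p).symm ⁻¹' (X ∪ Y)) :=
    hlogX.union (hXc.isClosed.preimage continuous_sphereChart_symm)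
      (hYc.isClosed.preimage continuous_sphereChart_symm)
      (isPreconnected_preimage_sphereChart_symm hconn fun h => hqW (Or.inl h.1)) hlogY
  refine not_hasContinuousLogOn_frontier (isBounded_preimage_sphereChart_symm hq)
    (by rw [mem_preimage, sphereChart_symm_zero hpq]; exact ⟨hpW, hpu⟩) (hlog.mono ?_)
  exact (continuous_sphereChart_symm.frontier_preimage_subset _).trans (preimage_mono hfr)

/-- If two compact connected subsets of the `2`-sphere each have connected
complement and intersect in a nonempty connected set, then their union does
not separate the sphere. -/
theorem union_not_separating_sphere
    (X Y : Set ↥(Metric.sphere (0 : EuclideanSpace ℝ (Fin 3)) 1))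
    (hXc : IsCompact X) (hYc : IsCompact Y)
    (hXconn : IsConnected X) (hYconn : IsConnected Y)
    (hXns : IsPreconnected Xᶜ) (hYns : IsPreconnected Yᶜ)
    (hne : (X ∩ Y).Nonempty) (hconn : IsPreconnected (X ∩ Y)) :
    IsPreconnected (X ∪ Y)ᶜ :=
  union_not_separating_sphere_general X Y hXc hYc hXns hYns hne hconn
end
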